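/- arXiv:1306.6092 — 2 statements merged into one kernel-verified Lean document; each statement's English description precedes it below -/
import Mathlib

section
/- In a metric tree (uniquely geodesic metric space where the union of two segments meeting in a single point is a segment), the unique geodesic segment [x,y] equals the set {z ∈ M : d(x,y) = d(x,z) + d(z,y)}. -/
open Set

/-- A geodesic segment from `x` to `y`: the image of an isometric embedding of a
real interval `[a,b]` sending `a` to `x` and `b` to `y`. -/
def IsGeodesicSegment {X : Type*} [MetricSpace X] (s : Set X) (x y : X) : Prop :=
  ∃ a b : ℝ, a ≤ b ∧ ∃ f : ℝ → X,
    (∀ u ∈ Icc a b, ∀ v ∈ Icc a b, dist (f u) (f v) = |u - v|) ∧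
    f a = x ∧ f b = y ∧ s = f '' Icc a b

namespace IsGeodesicSegment

variable {X : Type*} [MetricSpace X] {s t : Set X} {x y z : X}

theorem left_mem (h : IsGeodesicSegment s x y) : x ∈ s := by
  obtain ⟨a, b, hab, f, -, hfa, -, rfl⟩ := h
  exact ⟨a, left_mem_Icc.2 hab, hfa⟩

theorem right_mem (h : IsGeodesicSegment s x y) : y ∈ s := by
  obtain ⟨a, b, hab, f, -, -, hfb, rfl⟩ := h
  exact ⟨b, right_mem_Icc.2 hab, hfb⟩

theorem dist_add_dist_eq (h : IsGeodesicSegment s x y) {w : X} (hw : w ∈ s) :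
    dist x w + dist w y = dist x y := by
  obtain ⟨a, b, hab, f, hf, rfl, rfl, rfl⟩ := h
  obtain ⟨u, hu, rfl⟩ := hw
  have ha := left_mem_Icc.2 hab
  have hb := right_mem_Icc.2 hab
  rw [hf a ha u hu, hf u hu b hb, hf a ha b hb, abs_of_nonpos (by linarith [hu.1]),
    abs_of_nonpos (by linarith [hu.2]), abs_of_nonpos (by linarith)]
  ring

theorem subset_setOf_dist_eq (h : IsGeodesicSegment s x y) :
    s ⊆ {w | dist x y = dist x w + dist w y} :=
  fun _ hw => (h.dist_add_dist_eq hw).symm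

/-- A point `w` common to both halves would satisfy
`dist x y + 2 * dist w z = dist x w + dist w y`, contradicting the triangle inequality
unless `w = z`. -/
theorem inter_eq_singleton_of_dist_eq (hs : IsGeodesicSegment s x z)
    (ht : IsGeodesicSegment t z y) (hz : dist x y = dist x z + dist z y) :
    s ∩ t = {z} := by
  refine Subset.antisymm (fun w ⟨hws, hwt⟩ => ?_)
    (singleton_subset_iff.2 ⟨hs.right_mem, ht.left_mem⟩)
  have hxz := hs.dist_add_dist_eq hws
  have hzy := ht.dist_add_dist_eq hwt
  have hwz : dist w z = 0 := by
    linarith [dist_triangle x w y, dist_comm w z, dist_nonneg (x := w) (y := z)]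
  exact dist_eq_zero.1 hwz

end IsGeodesicSegment

theorem geodesicSegment_eq_between_set {X : Type*} [MetricSpace X]
    (hunique : ∀ x y : X, ∃! s : Set X, IsGeodesicSegment s x y)
    (hglue : ∀ (x y z : X) (s t : Set X), IsGeodesicSegment s y x →
      IsGeodesicSegment t x z → s ∩ t = {x} → IsGeodesicSegment (s ∪ t) y z)
    (x y : X) (s : Set X) (hs : IsGeodesicSegment s x y) :
    s = {z : X | dist x y = dist x z + dist z y} := by
  refine Subset.antisymm hs.subset_setOf_dist_eq fun z hz => ?_
  obtain ⟨s₁, hs₁, -⟩ := hunique x z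
  obtain ⟨s₂, hs₂, -⟩ := hunique z y
  have hglued : IsGeodesicSegment (s₁ ∪ s₂) x y :=
    hglue z x y s₁ s₂ hs₁ hs₂ (hs₁.inter_eq_singleton_of_dist_eq hs₂ hz)
  rw [(hunique x y).unique hs hglued]
  exact Or.inl hs₁.right_mem
end

section
/- A metric space M in which every pair of points is joined by a unique arc that is isometric to a real interval satisfies: (i) unique geodesic segments exist between all pairs of points, and (ii) if [y,x] ∩ [x,z] = {x}, then [y,x] ∪ [x,z] = [y,z]. -/
open Set

/-- An arc joining `x` and `y`: a homeomorphic image of a closed real interval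
with endpoints `x` and `y`. -/
def IsArc {X : Type*} [MetricSpace X] (A : Set X) (x y : X) : Prop :=
  ∃ a b : ℝ, a ≤ b ∧ ∃ f : ℝ → X,
    ContinuousOn f (Icc a b) ∧ InjOn f (Icc a b) ∧
    f a = x ∧ f b = y ∧ A = f '' Icc a b
/-!
An isometric embedding of an interval is continuous and injective, so every geodesic segment is
an arc; uniqueness of arcs thus gives uniqueness of geodesic segments, and existence comes from
the arcs themselves. For the gluing, two arcs `[y,x]` and `[x,z]` meeting only in `x` concatenate
to an arc from `y` to `z`, which is then a geodesic segment by hypothesis.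
-/

section

variable {X : Type*} [MetricSpace X]

lemma IsGeodesicSegment.isArc {s : Set X} {x y : X} (h : IsGeodesicSegment s x y) :
    IsArc s x y := by
  obtain ⟨a, b, hab, f, hf, hfa, hfb, rfl⟩ := h
  refine ⟨a, b, hab, f, ?_, ?_, hfa, hfb, rfl⟩
  · exact (LipschitzOnWith.mk_one fun u hu v hv => (hf u hu v hv).le).continuousOn
  · intro u hu v hv huv
    have hdist := hf u hu v hv
    rwa [huv, dist_self, eq_comm, abs_eq_zero, sub_eq_zero] at hdist

lemma IsArc.exists_param_from {A : Set X} {x y : X} (h : IsArc A x y) (b : ℝ) :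
    ∃ e, b ≤ e ∧ ∃ g : ℝ → X, ContinuousOn g (Icc b e) ∧ InjOn g (Icc b e) ∧
      g b = x ∧ g e = y ∧ A = g '' Icc b e := by
  obtain ⟨c, d, hcd, g, hgc, hgi, hgx, hgd, rfl⟩ := h
  have hshift : (· + (c - b)) '' Icc b (b + (d - c)) = Icc c d := by
    rw [image_add_const_Icc]; congr 1 <;> ring
  have hmaps : MapsTo (· + (c - b)) (Icc b (b + (d - c))) (Icc c d) :=
    hshift ▸ mapsTo_image _ _
  refine ⟨b + (d - c), by linarith, fun u => g (u + (c - b)),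
    hgc.comp (continuous_add_const _).continuousOn hmaps,
    hgi.comp (add_left_injective _).injOn hmaps, by simpa using hgx, ?_, ?_⟩
  · simpa [add_sub_assoc'] using hgd
  · rw [← hshift, image_image]

lemma IsArc.union {A B : Set X} {x y z : X} (hA : IsArc A y x) (hB : IsArc B x z)
    (hAB : A ∩ B = {x}) : IsArc (A ∪ B) y z := by
  obtain ⟨a, b, hab, f, hfc, hfi, hfa, hfb, rfl⟩ := hA
  obtain ⟨e, hbe, g, hgc, hgi, hgb, hge, rfl⟩ := hB.exists_param_from b
  let h : ℝ → X := fun u => if u ≤ b then f u else g u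
  have hf : EqOn h f (Icc a b) := fun u hu => if_pos hu.2
  have hg : EqOn h g (Icc b e) := by
    intro u hu
    by_cases hub : u ≤ b
    · obtain rfl : u = b := le_antisymm hub hu.1
      simp only [h, if_pos le_rfl, hfb, hgb]
    · exact if_neg hub
  -- A point hit from both halves lies in `A ∩ B = {x}`, hence both parameters equal `b`.
  have hmixed : ∀ u ∈ Icc a b, ∀ v ∈ Icc b e, h u = h v → u = v := by
    intro u hu v hv huv
    rw [hf hu, hg hv] at huv
    have hx : f u = x := by
      rw [← mem_singleton_iff, ← hAB]
      exact ⟨mem_image_of_mem f hu, huv ▸ mem_image_of_mem g hv⟩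
    have hu' : u = b := hfi hu (right_mem_Icc.2 hab) (hx.trans hfb.symm)
    have hv' : v = b := hgi hv (left_mem_Icc.2 hbe) ((huv.symm.trans hx).trans hgb.symm)
    rw [hu', hv']
  have hsplit : Icc a e = Icc a b ∪ Icc b e := (Icc_union_Icc_eq_Icc hab hbe).symm
  refine ⟨a, e, hab.trans hbe, h, ?_, ?_, ?_, ?_, ?_⟩
  · rw [hsplit]
    exact (hfc.congr hf).union_of_isClosed (hgc.congr hg) isClosed_Icc isClosed_Icc
  · rw [hsplit]
    rintro u (hu | hu) v (hv | hv) huv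
    · exact hfi hu hv (by rwa [hf hu, hf hv] at huv)
    · exact hmixed u hu v hv huv
    · exact (hmixed v hv u hu huv.symm).symm
    · exact hgi hu hv (by rwa [hg hu, hg hv] at huv)
  · rw [hf (left_mem_Icc.2 hab), hfa]
  · rw [hg (right_mem_Icc.2 hbe), hge]
  · rw [hsplit, image_union, hf.image_eq, hg.image_eq]

end

theorem unique_arcs_implies_unique_geodesics_and_gluing {X : Type*} [MetricSpace X]
    (harc : ∀ x y : X, ∃! A : Set X, IsArc A x y)
    (hiso : ∀ (x y : X) (A : Set X), IsArc A x y → IsGeodesicSegment A x y) :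
    (∀ x y : X, ∃! s : Set X, IsGeodesicSegment s x y) ∧
    (∀ (x y z : X) (s t : Set X), IsGeodesicSegment s y x →
      IsGeodesicSegment t x z → s ∩ t = {x} → IsGeodesicSegment (s ∪ t) y z) := by
  refine ⟨fun x y => ?_, fun x y z s t hs ht hst => ?_⟩
  · obtain ⟨A, hA, hA_unique⟩ := harc x y
    exact ⟨A, hiso x y A hA, fun s hs => hA_unique s hs.isArc⟩
  · exact hiso y z _ (hs.isArc.union ht.isArc hst)
end
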